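/- Let ε ∈ (0,1) and let C, Y₁, Y₂, R be mutually independent random variables, where C is Bernoulli, Y₁ and Y₂ are square-integrable with P(Y₁ < 1) = 1 and P(Y₂ ≥ 1) = 1, and R is uniform on [1−ε, 1+ε]. Set Y′ = C·Y₁ + (1−C)·Y₂ and Y″ = C·E[Y₁] + (1−C)·E[Y₂]. Then E[Y″] = E[Y′], the standard deviation of Y″ is at most the standard deviation of Y′, and P(Y″R ≤ 1+ε) ≤ P(Y′R ≤ 1+ε). -/

import Mathlib

open MeasureTheory ProbabilityTheory Real

/-- The uniform probability measure on the interval `[a, b]`. -/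
noncomputable def uniformIcc (a b : ℝ) : Measure ℝ :=
  (ENNReal.ofReal (b - a))⁻¹ • (MeasureTheory.volume.restrict (Set.Icc a b))

/-- The median of `2*n+1` real values: their `(n+1)`-st smallest value. -/
noncomputable def medianOf {n : ℕ} (v : Fin (2 * n + 1) → ℝ) : ℝ :=
  (Multiset.sort (↑(List.ofFn v)) (· ≤ ·)).get ⟨n, by simp; omega⟩

/-- The nuisance factor `f(ε) = (1+ε)/((1-ε)² (1+ε-ε²))`. -/
noncomputable def nuisance (ε : ℝ) : ℝ := (1 + ε) / ((1 - ε) ^ 2 * (1 + ε - ε ^ 2))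

/-!
Since `C` is `{0, 1}`-valued and independent of `(Y₁, R)` and of `(Y₂, R)`, every quantity
attached to a mixture is the `P(C = 1)`, `P(C = 0)`-weighted combination of the same quantity for
its two components. The means of `Y′` and `Y″` therefore agree, and their second moments differ
by `P(C = 1) Var Y₁ + P(C = 0) Var Y₂ ≥ 0`. For the probabilities, the `C = 1` term of `Y′` is
maximal because `Y₁ R < R ≤ 1 + ε`, and the `C = 0` terms compare by Jensen's inequality: for
`y ≥ 1`, `P(y R ≤ 1 + ε) = max (((1 + ε) / y - (1 - ε)) / (2ε)) 0` is convex in `y`.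
-/

lemma ae_mem_Icc_uniformIcc (a b : ℝ) : ∀ᵐ r ∂uniformIcc a b, r ∈ Set.Icc a b :=
  Measure.ae_smul_measure (ae_restrict_mem measurableSet_Icc) _

/-- The probability that `y * R ≤ 1 + ε` for `R` uniform on `[1 - ε, 1 + ε]`, when `y ≥ 1`. -/
noncomputable def uniformMulLeProb (ε y : ℝ) : ℝ := max (((1 + ε) / y - (1 - ε)) / (2 * ε)) 0

lemma uniformIcc_setOf_mul_le {ε y : ℝ} (hε : 0 < ε) (hy : 1 ≤ y) :
    uniformIcc (1 - ε) (1 + ε) {r | y * r ≤ 1 + ε} = ENNReal.ofReal (uniformMulLeProb ε y) := by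
  have hset : {r : ℝ | y * r ≤ 1 + ε} = Set.Iic ((1 + ε) / y) := by
    ext r; simp [le_div_iff₀ (zero_lt_one.trans_le hy), mul_comm]
  have hIcc :
      Set.Iic ((1 + ε) / y) ∩ Set.Icc (1 - ε) (1 + ε) = Set.Icc (1 - ε) ((1 + ε) / y) := by
    rw [Set.inter_comm, ← Set.Ici_inter_Iic, Set.inter_assoc, Set.Iic_inter_Iic,
      inf_eq_right.2 (div_le_self (by linarith) hy), Set.Ici_inter_Iic]
  rw [hset, uniformIcc, Measure.smul_apply, Measure.restrict_apply measurableSet_Iic, hIcc,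
    Real.volume_Icc, smul_eq_mul, show 1 + ε - (1 - ε) = 2 * ε by ring, uniformMulLeProb,
    ← ENNReal.ofReal_inv_of_pos (by positivity), ← ENNReal.ofReal_mul (by positivity),
    ENNReal.ofReal_max, ENNReal.ofReal_zero, max_eq_left zero_le, inv_mul_eq_div]

lemma uniformMulLeProb_nonneg (ε y : ℝ) : 0 ≤ uniformMulLeProb ε y :=
  le_max_right _ _

lemma uniformMulLeProb_le_one {ε y : ℝ} (hε : 0 < ε) (hy : 1 ≤ y) :
    uniformMulLeProb ε y ≤ 1 := by
  refine max_le ?_ zero_le_one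
  rw [div_le_one (by positivity)]
  linarith [div_le_self (by linarith : 0 ≤ 1 + ε) hy]

lemma convexOn_uniformMulLeProb {ε : ℝ} (hε : 0 < ε) :
    ConvexOn ℝ (Set.Ioi 0) (uniformMulLeProb ε) := by
  have hlin : ConvexOn ℝ (Set.Ioi 0)
      fun y : ℝ => ((1 + ε) / (2 * ε)) • y ^ (-1 : ℤ) + -((1 - ε) / (2 * ε)) :=
    ((convexOn_zpow (-1)).smul (by positivity)).add_const _
  refine (hlin.sup (convexOn_const 0 (convex_Ioi 0))).congr fun y _ => ?_
  simp only [Pi.sup_apply, uniformMulLeProb, smul_eq_mul, zpow_neg_one]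
  congr 1
  field_simp
  ring

lemma measurable_uniformMulLeProb (ε : ℝ) : Measurable (uniformMulLeProb ε) := by
  unfold uniformMulLeProb
  fun_prop

lemma continuousOn_uniformMulLeProb (ε : ℝ) : ContinuousOn (uniformMulLeProb ε) (Set.Ioi 0) :=
  ContinuousOn.sup (((continuousOn_const.div continuousOn_id fun _ hy => ne_of_gt hy).sub
    continuousOn_const).div_const _) continuousOn_const

lemma ProbabilityTheory.IndepFun.measure_prodMk_mem_eq_lintegral {Ω β γ : Type*}
    [MeasurableSpace Ω] [MeasurableSpace β] [MeasurableSpace γ] {μ : Measure Ω} [IsFiniteMeasure μ]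
    {X : Ω → β} {Y : Ω → γ} (hXY : IndepFun X Y μ) (hX : Measurable X) (hY : Measurable Y)
    {s : Set (β × γ)} (hs : MeasurableSet s) :
    μ {ω | (X ω, Y ω) ∈ s} = ∫⁻ ω, μ.map Y (Prod.mk (X ω) ⁻¹' s) ∂μ := by
  rw [show {ω | (X ω, Y ω) ∈ s} = (fun ω => (X ω, Y ω)) ⁻¹' s from rfl,
    ← Measure.map_apply (hX.prodMk hY) hs,
    hXY.map_prod_eq_prod_map_map hX.aemeasurable hY.aemeasurable, Measure.prod_apply hs,
    lintegral_map (measurable_measure_prodMk_left hs) hX]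

section Mixture

variable {Ω : Type*} [MeasurableSpace Ω] {μ : Measure Ω} {C X₁ X₂ : Ω → ℝ}

lemma mixture_pow_eq {c : ℝ} (hc : c = 0 ∨ c = 1) (x y : ℝ) (n : ℕ) :
    (c * x + (1 - c) * y) ^ n = c * x ^ n + (1 - c) * y ^ n := by
  rcases hc with rfl | rfl <;> simp

lemma integrable_of_ae_eq_zero_or_one [IsFiniteMeasure μ] (hCm : AEStronglyMeasurable C μ)
    (hC : ∀ᵐ ω ∂μ, C ω = 0 ∨ C ω = 1) : Integrable C μ := by
  refine Integrable.of_bound hCm 1 ?_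
  filter_upwards [hC] with ω hω
  rcases hω with h | h <;> simp [h]

lemma integral_mem_Icc_of_ae_eq_zero_or_one [IsProbabilityMeasure μ]
    (hCm : AEStronglyMeasurable C μ) (hC : ∀ᵐ ω ∂μ, C ω = 0 ∨ C ω = 1) :
    μ[C] ∈ Set.Icc 0 1 := by
  have hC01 : ∀ᵐ ω ∂μ, C ω ∈ Set.Icc (0 : ℝ) 1 := by
    filter_upwards [hC] with ω hω
    rcases hω with h | h <;> simp [h]
  refine ⟨integral_nonneg_of_ae (hC01.mono fun _ h => h.1), ?_⟩
  simpa using integral_mono_ae (integrable_of_ae_eq_zero_or_one hCm hC) (integrable_const 1)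
    (hC01.mono fun _ h => h.2)

lemma memLp_mixture {p : ENNReal} (hCm : AEStronglyMeasurable C μ)
    (hC : ∀ᵐ ω ∂μ, C ω = 0 ∨ C ω = 1) (hX₁ : MemLp X₁ p μ) (hX₂ : MemLp X₂ p μ) :
    MemLp (fun ω => C ω * X₁ ω + (1 - C ω) * X₂ ω) p μ := by
  refine (hX₁.norm.add hX₂.norm).mono'
    ((hCm.mul hX₁.1).add ((aestronglyMeasurable_const.sub hCm).mul hX₂.1)) ?_
  filter_upwards [hC] with ω hω
  rcases hω with h | h <;> simp [h]

lemma integral_mixture [IsProbabilityMeasure μ] (hCm : AEStronglyMeasurable C μ)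
    (hC : ∀ᵐ ω ∂μ, C ω = 0 ∨ C ω = 1) (hCX₁ : IndepFun C X₁ μ) (hCX₂ : IndepFun C X₂ μ)
    (hX₁ : Integrable X₁ μ) (hX₂ : Integrable X₂ μ) :
    ∫ ω, (C ω * X₁ ω + (1 - C ω) * X₂ ω) ∂μ = μ[C] * μ[X₁] + (1 - μ[C]) * μ[X₂] := by
  have hCi := integrable_of_ae_eq_zero_or_one hCm hC
  have hC'i : Integrable (fun ω => 1 - C ω) μ := (integrable_const 1).sub hCi
  have hC'X₂ : IndepFun (fun ω => 1 - C ω) X₂ μ :=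
    hCX₂.comp (measurable_const.sub measurable_id) measurable_id
  have hCX₁i : Integrable (fun ω => C ω * X₁ ω) μ := hCX₁.integrable_mul hCi hX₁
  have hC'X₂i : Integrable (fun ω => (1 - C ω) * X₂ ω) μ := hC'X₂.integrable_mul hC'i hX₂
  rw [integral_add hCX₁i hC'X₂i,
    hCX₁.integral_fun_mul_eq_mul_integral hCm hX₁.1,
    hC'X₂.integral_fun_mul_eq_mul_integral hC'i.1 hX₂.1, integral_sub (integrable_const 1) hCi]
  simp

lemma integral_mixture_integral [IsProbabilityMeasure μ] (hCm : AEStronglyMeasurable C μ)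
    (hC : ∀ᵐ ω ∂μ, C ω = 0 ∨ C ω = 1) (hCX₁ : IndepFun C X₁ μ) (hCX₂ : IndepFun C X₂ μ)
    (hX₁ : Integrable X₁ μ) (hX₂ : Integrable X₂ μ) :
    ∫ ω, (C ω * μ[X₁] + (1 - C ω) * μ[X₂]) ∂μ = ∫ ω, (C ω * X₁ ω + (1 - C ω) * X₂ ω) ∂μ := by
  rw [integral_mixture hCm hC hCX₁ hCX₂ hX₁ hX₂]
  refine (integral_mixture hCm hC (indepFun_const_right C _) (indepFun_const_right C _)
    (integrable_const _) (integrable_const _)).trans ?_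
  simp

lemma integral_mixture_sq [IsProbabilityMeasure μ] (hCm : AEStronglyMeasurable C μ)
    (hC : ∀ᵐ ω ∂μ, C ω = 0 ∨ C ω = 1) (hCX₁ : IndepFun C X₁ μ) (hCX₂ : IndepFun C X₂ μ)
    (hX₁ : MemLp X₁ 2 μ) (hX₂ : MemLp X₂ 2 μ) :
    ∫ ω, (C ω * X₁ ω + (1 - C ω) * X₂ ω) ^ 2 ∂μ =
      μ[C] * ∫ ω, X₁ ω ^ 2 ∂μ + (1 - μ[C]) * ∫ ω, X₂ ω ^ 2 ∂μ := by
  rw [integral_congr_ae (hC.mono fun ω hω => mixture_pow_eq hω (X₁ ω) (X₂ ω) 2)]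
  exact integral_mixture hCm hC (hCX₁.comp measurable_id (measurable_id.pow_const 2))
    (hCX₂.comp measurable_id (measurable_id.pow_const 2)) hX₁.integrable_sq hX₂.integrable_sq

lemma variance_mixture_integral_le [IsProbabilityMeasure μ] (hCm : AEStronglyMeasurable C μ)
    (hC : ∀ᵐ ω ∂μ, C ω = 0 ∨ C ω = 1) (hCX₁ : IndepFun C X₁ μ) (hCX₂ : IndepFun C X₂ μ)
    (hX₁ : MemLp X₁ 2 μ) (hX₂ : MemLp X₂ 2 μ) :
    variance (fun ω => C ω * μ[X₁] + (1 - C ω) * μ[X₂]) μ ≤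
      variance (fun ω => C ω * X₁ ω + (1 - C ω) * X₂ ω) μ := by
  have hv₁ := variance_nonneg X₁ μ
  have hv₂ := variance_nonneg X₂ μ
  rw [variance_eq_sub hX₁] at hv₁
  rw [variance_eq_sub hX₂] at hv₂
  obtain ⟨hp₀, hp₁⟩ := integral_mem_Icc_of_ae_eq_zero_or_one hCm hC
  rw [variance_eq_sub (memLp_mixture hCm hC (memLp_const _) (memLp_const _)),
    variance_eq_sub (memLp_mixture hCm hC hX₁ hX₂)]
  simp only [Pi.pow_apply] at hv₁ hv₂ ⊢
  rw [integral_mixture_integral hCm hC hCX₁ hCX₂ (hX₁.integrable one_le_two)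
      (hX₂.integrable one_le_two), integral_mixture_sq hCm hC hCX₁ hCX₂ hX₁ hX₂,
    integral_mixture_sq hCm hC (indepFun_const_right C _) (indepFun_const_right C _)
      (memLp_const _) (memLp_const _)]
  simp only [integral_const, probReal_univ, one_smul]
  linarith [mul_nonneg hp₀ hv₁, mul_nonneg (sub_nonneg.2 hp₁) hv₂]

lemma measure_mixture_prod_mem {β : Type*} [MeasurableSpace β] {W : Ω → β}
    (hCm : Measurable C) (hC : ∀ᵐ ω ∂μ, C ω = 0 ∨ C ω = 1) (hX₂m : Measurable X₂)
    (hWm : Measurable W) {s : Set (ℝ × β)} (hs : MeasurableSet s)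
    (hCX₁ : IndepFun C (fun ω => (X₁ ω, W ω)) μ) (hCX₂ : IndepFun C (fun ω => (X₂ ω, W ω)) μ) :
    μ {ω | (C ω * X₁ ω + (1 - C ω) * X₂ ω, W ω) ∈ s} =
      μ (C ⁻¹' {1}) * μ {ω | (X₁ ω, W ω) ∈ s} + μ (C ⁻¹' {0}) * μ {ω | (X₂ ω, W ω) ∈ s} := by
  have hsplit : {ω | (C ω * X₁ ω + (1 - C ω) * X₂ ω, W ω) ∈ s} =ᵐ[μ]
      ((C ⁻¹' {1} ∩ (fun ω => (X₁ ω, W ω)) ⁻¹' s) ∪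
        (C ⁻¹' {0} ∩ (fun ω => (X₂ ω, W ω)) ⁻¹' s) : Set Ω) := by
    refine Filter.eventuallyEq_set.2 ?_
    filter_upwards [hC] with ω hω
    rcases hω with h | h <;> simp [h]
  have hdisj : Disjoint (C ⁻¹' {1} ∩ (fun ω => (X₁ ω, W ω)) ⁻¹' s)
      (C ⁻¹' {0} ∩ (fun ω => (X₂ ω, W ω)) ⁻¹' s) :=
    ((Set.disjoint_singleton.2 one_ne_zero).preimage C).mono Set.inter_subset_left
      Set.inter_subset_left
  rw [measure_congr hsplit,
    measure_union hdisj ((hCm (measurableSet_singleton 0)).inter ((hX₂m.prodMk hWm) hs)),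
    hCX₁.measure_inter_preimage_eq_mul _ _ (measurableSet_singleton 1) hs,
    hCX₂.measure_inter_preimage_eq_mul _ _ (measurableSet_singleton 0) hs]
  rfl

lemma measure_integral_mul_le_le [IsProbabilityMeasure μ] {ε : ℝ} (hε : 0 < ε) {Y R : Ω → ℝ}
    (hYm : Measurable Y) (hRm : Measurable R) (hYR : IndepFun Y R μ) (hY : ∀ᵐ ω ∂μ, 1 ≤ Y ω)
    (hYi : Integrable Y μ) (hR : μ.map R = uniformIcc (1 - ε) (1 + ε)) :
    μ {ω | μ[Y] * R ω ≤ 1 + ε} ≤ μ {ω | Y ω * R ω ≤ 1 + ε} := by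
  have hs : MeasurableSet {p : ℝ × ℝ | p.1 * p.2 ≤ 1 + ε} := by measurability
  have hlaw :
      ∀ y, 1 ≤ y → μ.map R {r | y * r ≤ 1 + ε} = ENNReal.ofReal (uniformMulLeProb ε y) :=
    fun y hy => by rw [hR, uniformIcc_setOf_mul_le hε hy]
  have hmean : 1 ≤ μ[Y] := by
    simpa using integral_mono_ae (integrable_const 1) hYi hY
  have hgY : Integrable (fun ω => uniformMulLeProb ε (Y ω)) μ := by
    refine Integrable.of_bound
      ((measurable_uniformMulLeProb ε).comp hYm).aestronglyMeasurable 1 ?_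
    filter_upwards [hY] with ω hω
    rw [Real.norm_of_nonneg (uniformMulLeProb_nonneg ε _)]
    exact uniformMulLeProb_le_one hε hω
  have hIci : Set.Ici (1 : ℝ) ⊆ Set.Ioi 0 := Set.Ici_subset_Ioi.2 zero_lt_one
  have hjensen : uniformMulLeProb ε μ[Y] ≤ ∫ ω, uniformMulLeProb ε (Y ω) ∂μ :=
    ((convexOn_uniformMulLeProb hε).subset hIci (convex_Ici 1)).map_integral_le
      ((continuousOn_uniformMulLeProb ε).mono hIci) isClosed_Ici hY hYi hgY
  calc μ {ω | μ[Y] * R ω ≤ 1 + ε}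
      = ENNReal.ofReal (uniformMulLeProb ε μ[Y]) := by
        rw [← hlaw _ hmean]
        exact (Measure.map_apply hRm
          (measurableSet_le (measurable_id.const_mul _) measurable_const)).symm
    _ ≤ ENNReal.ofReal (∫ ω, uniformMulLeProb ε (Y ω) ∂μ) := ENNReal.ofReal_le_ofReal hjensen
    _ = ∫⁻ ω, ENNReal.ofReal (uniformMulLeProb ε (Y ω)) ∂μ :=
        ofReal_integral_eq_lintegral_ofReal hgY (.of_forall fun _ => uniformMulLeProb_nonneg ε _)
    _ = ∫⁻ ω, μ.map R (Prod.mk (Y ω) ⁻¹' {p : ℝ × ℝ | p.1 * p.2 ≤ 1 + ε}) ∂μ :=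
        lintegral_congr_ae (hY.mono fun ω hω => (hlaw _ hω).symm)
    _ = μ {ω | Y ω * R ω ≤ 1 + ε} := (hYR.measure_prodMk_mem_eq_lintegral hYm hRm hs).symm

lemma measure_mixture_integral_mul_le [IsProbabilityMeasure μ] {ε : ℝ} (hε₀ : 0 < ε)
    (hε₁ : ε < 1) {R : Ω → ℝ} (hCm : Measurable C) (hX₂m : Measurable X₂) (hRm : Measurable R)
    (hC : ∀ᵐ ω ∂μ, C ω = 0 ∨ C ω = 1) (hX₁ : ∀ᵐ ω ∂μ, X₁ ω < 1) (hX₂ : ∀ᵐ ω ∂μ, 1 ≤ X₂ ω)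
    (hX₂i : Integrable X₂ μ) (hX₂R : IndepFun X₂ R μ)
    (hCX₁R : IndepFun C (fun ω => (X₁ ω, R ω)) μ) (hCX₂R : IndepFun C (fun ω => (X₂ ω, R ω)) μ)
    (hR : μ.map R = uniformIcc (1 - ε) (1 + ε)) :
    μ {ω | (C ω * μ[X₁] + (1 - C ω) * μ[X₂]) * R ω ≤ 1 + ε} ≤
      μ {ω | (C ω * X₁ ω + (1 - C ω) * X₂ ω) * R ω ≤ 1 + ε} := by
  have hs : MeasurableSet {p : ℝ × ℝ | p.1 * p.2 ≤ 1 + ε} := by measurability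
  have hCxR (x : ℝ) : IndepFun C (fun ω => (x, R ω)) μ :=
    hCX₂R.comp measurable_id (measurable_const.prodMk measurable_snd)
  have hX₁R : μ {ω | μ[X₁] * R ω ≤ 1 + ε} ≤ μ {ω | X₁ ω * R ω ≤ 1 + ε} := by
    refine measure_mono_ae ?_
    filter_upwards [hX₁, ae_of_ae_map hRm.aemeasurable (hR ▸ ae_mem_Icc_uniformIcc _ _)]
      with ω hX₁ω hRω _
    show X₁ ω * R ω ≤ 1 + ε
    nlinarith [hRω.1, hRω.2]
  calc _ = μ (C ⁻¹' {1}) * μ {ω | μ[X₁] * R ω ≤ 1 + ε} +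
        μ (C ⁻¹' {0}) * μ {ω | μ[X₂] * R ω ≤ 1 + ε} :=
      measure_mixture_prod_mem hCm hC measurable_const hRm hs (hCxR _) (hCxR _)
    _ ≤ μ (C ⁻¹' {1}) * μ {ω | X₁ ω * R ω ≤ 1 + ε} +
        μ (C ⁻¹' {0}) * μ {ω | X₂ ω * R ω ≤ 1 + ε} :=
      add_le_add (mul_le_mul_right hX₁R _)
        (mul_le_mul_right (measure_integral_mul_le_le hε₀ hX₂m hRm hX₂R hX₂ hX₂i hR) _)
    _ = _ := (measure_mixture_prod_mem hCm hC hX₂m hRm hs hCX₁R hCX₂R).symm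

end Mixture

theorem mixture_mean_replacement {Ω : Type*} [MeasureSpace Ω]
    [IsProbabilityMeasure (ℙ : Measure Ω)]
    (ε : ℝ) (hε : ε ∈ Set.Ioo (0 : ℝ) 1)
    (C Y₁ Y₂ R : Ω → ℝ)
    (hCm : Measurable C) (hY₁m : Measurable Y₁) (hY₂m : Measurable Y₂) (hRm : Measurable R)
    (hindep : iIndepFun ![C, Y₁, Y₂, R] ℙ)
    (hC : ℙ {ω | C ω = 0 ∨ C ω = 1} = 1)
    (hY₁2 : MemLp Y₁ 2 ℙ) (hY₂2 : MemLp Y₂ 2 ℙ)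
    (hY₁ : ℙ {ω | Y₁ ω < 1} = 1)
    (hY₂ : ℙ {ω | 1 ≤ Y₂ ω} = 1)
    (hR : Measure.map R ℙ = uniformIcc (1 - ε) (1 + ε)) :
    (∫ ω, (C ω * (∫ x, Y₁ x ∂ℙ) + (1 - C ω) * (∫ x, Y₂ x ∂ℙ)) ∂ℙ =
        ∫ ω, (C ω * Y₁ ω + (1 - C ω) * Y₂ ω) ∂ℙ) ∧
      Real.sqrt (variance (fun ω => C ω * (∫ x, Y₁ x ∂ℙ) + (1 - C ω) * (∫ x, Y₂ x ∂ℙ)) ℙ) ≤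
        Real.sqrt (variance (fun ω => C ω * Y₁ ω + (1 - C ω) * Y₂ ω) ℙ) ∧
      ℙ {ω | (C ω * (∫ x, Y₁ x ∂ℙ) + (1 - C ω) * (∫ x, Y₂ x ∂ℙ)) * R ω ≤ 1 + ε} ≤
        ℙ {ω | (C ω * Y₁ ω + (1 - C ω) * Y₂ ω) * R ω ≤ 1 + ε} := by
  obtain ⟨hε₀, hε₁⟩ := hε
  have hCae : ∀ᵐ ω, C ω = 0 ∨ C ω = 1 := (ae_iff_prob_eq_one (by fun_prop)).2 hC
  have hY₁ae : ∀ᵐ ω, Y₁ ω < 1 := (ae_iff_prob_eq_one (by fun_prop)).2 hY₁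
  have hY₂ae : ∀ᵐ ω, 1 ≤ Y₂ ω := (ae_iff_prob_eq_one (by fun_prop)).2 hY₂
  have hmeas : ∀ i, Measurable (![C, Y₁, Y₂, R] i) := by
    intro i; fin_cases i <;> assumption
  have hCY₁ : IndepFun C Y₁ ℙ := hindep.indepFun (i := 0) (j := 1) (by decide)
  have hCY₂ : IndepFun C Y₂ ℙ := hindep.indepFun (i := 0) (j := 2) (by decide)
  have hY₂R : IndepFun Y₂ R ℙ := hindep.indepFun (i := 2) (j := 3) (by decide)
  have hCY₁R : IndepFun C (fun ω => (Y₁ ω, R ω)) ℙ :=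
    (hindep.indepFun_prodMk hmeas 1 3 0 (by decide) (by decide)).symm
  have hCY₂R : IndepFun C (fun ω => (Y₂ ω, R ω)) ℙ :=
    (hindep.indepFun_prodMk hmeas 2 3 0 (by decide) (by decide)).symm
  have hY₂i : Integrable Y₂ ℙ := hY₂2.integrable one_le_two
  exact ⟨integral_mixture_integral hCm.aestronglyMeasurable hCae hCY₁ hCY₂
      (hY₁2.integrable one_le_two) hY₂i,
    Real.sqrt_le_sqrt
      (variance_mixture_integral_le hCm.aestronglyMeasurable hCae hCY₁ hCY₂ hY₁2 hY₂2),
    measure_mixture_integral_mul_le hε₀ hε₁ hCm hY₂m hRm hCae hY₁ae hY₂ae hY₂i hY₂R hCY₁R hCY₂R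
      hR⟩
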